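/- arXiv:1404.3303 — 5 statements merged into one kernel-verified Lean document; each statement's English description precedes it below -/
import Mathlib

section
/- Let Θ be a real random variable with normal distribution N(μ, τ²) and Y an independent real random variable with normal distribution N(0, σ²), where σ, τ > 0, and set X = Θ + Y. Then the conditional expectation of Θ given X satisfies, almost surely, E[Θ | X] = X + σ²/(σ² + τ²) · (μ − X). -/
/-!
Put `k = Cov(Θ, X) / Var X`. The pair `(Θ - k X, X)` is a linear image of a Gaussian vector,
hence Gaussian, and it is uncorrelated by the choice of `k`, hence independent. Therefore
`E[Θ | X] = E[Θ - k X] + k X = E Θ + k (X - E X)`, the Gaussian regression formula. When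
`X = Θ + Y` with `Θ ⟂ Y`, one has `E Θ = E X = μ`, `Cov(Θ, X) = τ²` and `Var X = σ² + τ²`.
-/

open MeasureTheory ProbabilityTheory

namespace ProbabilityTheory

variable {Ω : Type*} {mΩ : MeasurableSpace Ω} {P : Measure Ω}

lemma HasGaussianLaw.prodMk_sub_const_mul {Θ X : Ω → ℝ}
    (hΘX : HasGaussianLaw (fun ω ↦ (Θ ω, X ω)) P) (k : ℝ) :
    HasGaussianLaw (fun ω ↦ (Θ ω - k * X ω, X ω)) P := by
  simpa using hΘX.map_fun
    ((ContinuousLinearMap.fst ℝ ℝ ℝ - k • ContinuousLinearMap.snd ℝ ℝ ℝ).prod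
      (ContinuousLinearMap.snd ℝ ℝ ℝ))

lemma HasGaussianLaw.prodMk_add {Θ Y : Ω → ℝ}
    (hΘY : HasGaussianLaw (fun ω ↦ (Θ ω, Y ω)) P) :
    HasGaussianLaw (fun ω ↦ (Θ ω, Θ ω + Y ω)) P := by
  simpa using hΘY.map_fun
    ((ContinuousLinearMap.fst ℝ ℝ ℝ).prod
      (ContinuousLinearMap.fst ℝ ℝ ℝ + ContinuousLinearMap.snd ℝ ℝ ℝ))

lemma condExp_comap_ae_eq_of_hasGaussianLaw [IsProbabilityMeasure P] {Θ X : Ω → ℝ}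
    (hΘ : Measurable Θ) (hX : Measurable X) (hΘX : HasGaussianLaw (fun ω ↦ (Θ ω, X ω)) P)
    (hvar : Var[X; P] ≠ 0) :
    P[Θ | MeasurableSpace.comap X inferInstance] =ᵐ[P]
      fun ω ↦ P[Θ] + cov[Θ, X; P] / Var[X; P] * (X ω - P[X]) := by
  set mX : MeasurableSpace Ω := MeasurableSpace.comap X inferInstance
  set k := cov[Θ, X; P] / Var[X; P] with hk
  set W : Ω → ℝ := fun ω ↦ Θ ω - k * X ω
  have hΘint := hΘX.fst.integrable
  have hXint := hΘX.snd.integrable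
  have hcov : cov[W, X; P] = 0 := by
    rw [covariance_fun_sub_left hΘX.fst.memLp_two (hΘX.snd.memLp_two.const_mul k)
      hΘX.snd.memLp_two, covariance_const_mul_left, covariance_self hX.aemeasurable, hk,
      div_mul_cancel₀ _ hvar, sub_self]
  have hindep : Indep (MeasurableSpace.comap W inferInstance) mX P :=
    (IndepFun_iff_Indep W X P).1
      ((hΘX.prodMk_sub_const_mul k).indepFun_of_covariance_eq_zero hcov)
  have hW : P[W | mX] =ᵐ[P] fun _ ↦ P[W] :=
    condExp_indep_eq (hΘ.sub (hX.const_mul k)).comap_le hX.comap_le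
      (comap_measurable W).stronglyMeasurable hindep
  have hXX : P[X | mX] = X :=
    condExp_of_stronglyMeasurable hX.comap_le (comap_measurable X).stronglyMeasurable hXint
  have hlin : P[Θ | mX] =ᵐ[P] P[W | mX] + k • P[X | mX] := by
    have hsplit : Θ = W + k • X := by ext ω; simp [W]
    rw [hsplit]
    exact (condExp_add (hΘint.sub (hXint.const_mul k)) (hXint.smul k) mX).trans
      (Filter.EventuallyEq.rfl.add (condExp_smul k X mX))
  have hEW : P[W] = P[Θ] - k * P[X] := by
    rw [integral_sub hΘint (hXint.const_mul k), integral_const_mul]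
  filter_upwards [hlin, hW] with ω hlinω hWω
  rw [hlinω, Pi.add_apply, hWω, hEW, hXX, Pi.smul_apply, smul_eq_mul]
  ring

end ProbabilityTheory

theorem bayes_premium_gaussian_random_shift_general
    {Ω : Type*} [MeasureSpace Ω] [IsProbabilityMeasure (ℙ : Measure Ω)]
    (μ σ τ : ℝ) (hσ : 0 < σ)
    (Θ Y : Ω → ℝ) (hΘmeas : Measurable Θ) (hYmeas : Measurable Y)
    (hΘ : Measure.map Θ ℙ = gaussianReal μ ((τ ^ 2).toNNReal))
    (hY : Measure.map Y ℙ = gaussianReal 0 ((σ ^ 2).toNNReal))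
    (hindep : IndepFun Θ Y ℙ)
    (X : Ω → ℝ) (hX : X = fun ω => Θ ω + Y ω) :
    (ℙ : Measure Ω)[Θ | MeasurableSpace.comap X (inferInstance : MeasurableSpace ℝ)] =ᵐ[ℙ]
      fun ω => X ω + σ ^ 2 / (σ ^ 2 + τ ^ 2) * (μ - X ω) := by
  have hΘlaw : HasLaw Θ (gaussianReal μ (τ ^ 2).toNNReal) := ⟨hΘmeas.aemeasurable, hΘ⟩
  have hYlaw : HasLaw Y (gaussianReal 0 (σ ^ 2).toNNReal) := ⟨hYmeas.aemeasurable, hY⟩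
  have hΘ2 : MemLp Θ 2 := hΘlaw.hasGaussianLaw.memLp_two
  have hY2 : MemLp Y 2 := hYlaw.hasGaussianLaw.memLp_two
  have hVΘ : Var[Θ] = τ ^ 2 := by simp [hΘlaw.variance_eq, sq_nonneg]
  have hEX : ℙ[X] = μ := by
    rw [hX, integral_add hΘlaw.hasGaussianLaw.integrable hYlaw.hasGaussianLaw.integrable,
      hΘlaw.integral_eq, hYlaw.integral_eq, integral_id_gaussianReal, integral_id_gaussianReal,
      add_zero]
  have hVX : Var[X] = σ ^ 2 + τ ^ 2 := by
    rw [hX, ← Pi.add_def, hindep.variance_add hΘ2 hY2, hVΘ, hYlaw.variance_eq]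
    simp [sq_nonneg, add_comm]
  have hcov : cov[Θ, X] = τ ^ 2 := by
    rw [hX, ← Pi.add_def, covariance_add_right hΘ2 hΘ2 hY2, covariance_self hΘmeas.aemeasurable,
      hindep.covariance_eq_zero hΘ2 hY2, hVΘ, add_zero]
  have hΘX : HasGaussianLaw (fun ω ↦ (Θ ω, X ω)) ℙ := by
    subst hX
    exact (hindep.hasGaussianLaw hΘlaw.hasGaussianLaw hYlaw.hasGaussianLaw).prodMk_add
  have hXmeas : Measurable X := hX ▸ hΘmeas.add hYmeas
  filter_upwards [condExp_comap_ae_eq_of_hasGaussianLaw hΘmeas hXmeas hΘX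
    (by rw [hVX]; positivity)] with ω hω
  rw [hω, hcov, hVX, hΘlaw.integral_eq, integral_id_gaussianReal, hEX]
  field_simp
  ring

/-- **Credibility premium formula in the Gaussian random shift model.**
If `Θ ∼ N(μ, τ²)`, `Y ∼ N(0, σ²)` are independent and `X = Θ + Y`, then
`E[Θ | X] = X + σ²/(σ² + τ²) · (μ − X)` almost surely. -/
theorem bayes_premium_gaussian_random_shift
    {Ω : Type*} [MeasureSpace Ω] [IsProbabilityMeasure (ℙ : Measure Ω)]
    (μ σ τ : ℝ) (hσ : 0 < σ) (hτ : 0 < τ)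
    (Θ Y : Ω → ℝ) (hΘmeas : Measurable Θ) (hYmeas : Measurable Y)
    (hΘ : Measure.map Θ ℙ = gaussianReal μ ((τ ^ 2).toNNReal))
    (hY : Measure.map Y ℙ = gaussianReal 0 ((σ ^ 2).toNNReal))
    (hindep : IndepFun Θ Y ℙ)
    (X : Ω → ℝ) (hX : X = fun ω => Θ ω + Y ω) :
    (ℙ : Measure Ω)[Θ | MeasurableSpace.comap X (inferInstance : MeasurableSpace ℝ)] =ᵐ[ℙ]
      fun ω => X ω + σ ^ 2 / (σ ^ 2 + τ ^ 2) * (μ - X ω) :=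
  bayes_premium_gaussian_random_shift_general μ σ τ hσ Θ Y hΘmeas hYmeas hΘ hY hindep X hX
end

section
/- Let Θ be a random vector in ℝ^d whose law has density h with respect to Lebesgue measure, and let Y be an independent ℝ^d-valued random vector whose law also has a Lebesgue density. Set X = Θ + Y. Assume that Θ and Y are integrable, and that for Lebesgue-almost every x the quantities E[h(x − Y)] ∈ (0, ∞) and E[‖Y‖ h(x − Y)] < ∞. Then, almost surely, E[Θ | X] = g(X), where g(x) = x − E[Y h(x − Y)] / E[h(x − Y)] (the quotient taken componentwise in the numerator, with the scalar denominator E[h(x − Y)]). -/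
/-!
Independence turns the law of `(Θ, Y)` into `h(θ) dθ ⊗ P_Y`, and the measure-preserving shear
`(θ, y) ↦ (θ + y, y)` turns it into the law of `(X, Y)`, which therefore has density
`h(x − y)` with respect to `dx ⊗ P_Y`. For any pair `(X, Y)` with a joint density `k` the Bayes
formula `E[φ(X, Y) | X] = ∫ φ(X, y) k(X, y) dμ(y) / ∫ k(X, y) dμ(y)` holds; with
`φ(x, y) = x_i − y_i` (so that `φ(X, Y) = Θ_i`) it becomes `g(X)_i` wherever the denominator is
positive, which is almost surely since that denominator is the density of `X`.
-/

open MeasureTheory ProbabilityTheory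
open scoped ENNReal

theorem map_add_prod_withDensity {G : Type*} [MeasurableSpace G] [AddGroup G] [MeasurableAdd₂ G]
    [MeasurableNeg G] (ν μ : Measure G) [SFinite ν] [SFinite μ] [ν.IsAddRightInvariant]
    {f : G → ℝ≥0∞} (hf : Measurable f) :
    ((ν.withDensity f).prod μ).map (fun z => (z.1 + z.2, z.2)) =
      (ν.prod μ).withDensity fun z => f (z.1 - z.2) := by
  have hshear : Measurable fun z : G × G => (z.1 + z.2, z.2) := by fun_prop
  refine Measure.ext_of_lintegral _ fun φ hφ => ?_
  rw [prod_withDensity_left hf, lintegral_map hφ hshear,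
    lintegral_withDensity_eq_lintegral_mul _ (by fun_prop) (by fun_prop),
    lintegral_withDensity_eq_lintegral_mul _ (by fun_prop) hφ]
  conv_rhs => rw [← (measurePreserving_add_prod ν μ).lintegral_comp (by fun_prop)]
  simp

theorem integral_sub_mul_div_integral {F : Type*} {mF : MeasurableSpace F} {μ : Measure F}
    {a : ℝ} {u v : F → ℝ} (hv : Integrable v μ) (huv : Integrable (fun y => (a - u y) * v y) μ)
    (hv_ne : ∫ y, v y ∂μ ≠ 0) :
    (∫ y, (a - u y) * v y ∂μ) / ∫ y, v y ∂μ = a - (∫ y, u y * v y ∂μ) / ∫ y, v y ∂μ := by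
  have hav : Integrable (fun y => a * v y) μ := hv.const_mul a
  have huv' : Integrable (fun y => u y * v y) μ :=
    (hav.sub huv).congr (.of_forall fun y => by simp only [Pi.sub_apply]; ring)
  simp only [sub_mul]
  rw [integral_sub hav huv', integral_const_mul]
  field_simp

section JointDensity

variable {Ω E F : Type*} {mΩ : MeasurableSpace Ω} {mE : MeasurableSpace E}
  {mF : MeasurableSpace F}

structure HasJointDensity (X : Ω → E) (Y : Ω → F) (k : E × F → ℝ) (P : Measure Ω)
    (ν : Measure E) (μ : Measure F) : Prop where
  measurable_left : Measurable X
  measurable_right : Measurable Y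
  measurable_density : Measurable k
  density_nonneg : 0 ≤ k
  map_eq : P.map (fun ω => (X ω, Y ω)) = (ν.prod μ).withDensity fun z => ENNReal.ofReal (k z)

theorem ProbabilityTheory.IndepFun.hasJointDensity_add {G : Type*} [MeasurableSpace G]
    [AddGroup G] [MeasurableAdd₂ G] [MeasurableNeg G] {P : Measure Ω} [IsFiniteMeasure P]
    {ν : Measure G} [SFinite ν] [ν.IsAddRightInvariant] {Θ Y : Ω → G} {f : G → ℝ}
    (hindep : IndepFun Θ Y P) (hΘ : Measurable Θ) (hY : Measurable Y) (hf : Measurable f)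
    (hf_nonneg : ∀ x, 0 ≤ f x) (hΘ_law : P.map Θ = ν.withDensity fun x => ENNReal.ofReal (f x)) :
    HasJointDensity (fun ω => Θ ω + Y ω) Y (fun z => f (z.1 - z.2)) P ν (P.map Y) where
  measurable_left := hΘ.add hY
  measurable_right := hY
  measurable_density := by fun_prop
  density_nonneg _ := hf_nonneg _
  map_eq := by
    have hpair : P.map (fun ω => (Θ ω, Y ω)) = (P.map Θ).prod (P.map Y) :=
      (indepFun_iff_map_prod_eq_prod_map_map hΘ.aemeasurable hY.aemeasurable).1 hindep
    rw [← map_add_prod_withDensity ν _ hf.ennreal_ofReal, ← hΘ_law, ← hpair,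
      Measure.map_map (by fun_prop) (hΘ.prodMk hY)]
    rfl

namespace HasJointDensity

variable {P : Measure Ω} {ν : Measure E} {μ : Measure F} {X : Ω → E} {Y : Ω → F}
  {k : E × F → ℝ} {φ : E × F → ℝ}

theorem integrable_comp_iff (hXY : HasJointDensity X Y k P ν μ) (hφ : Measurable φ) :
    Integrable (fun ω => φ (X ω, Y ω)) P ↔ Integrable (fun z => φ z * k z) (ν.prod μ) := by
  refine (integrable_map_measure hφ.aestronglyMeasurable
    (hXY.measurable_left.prodMk hXY.measurable_right).aemeasurable).symm.trans ?_
  rw [hXY.map_eq, integrable_withDensity_iff hXY.measurable_density.ennreal_ofReal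
    (.of_forall fun _ => ENNReal.ofReal_lt_top)]
  simp only [ENNReal.toReal_ofReal (hXY.density_nonneg _)]

theorem integrable_density [IsFiniteMeasure P] (hXY : HasJointDensity X Y k P ν μ) :
    Integrable k (ν.prod μ) := by
  simpa using (hXY.integrable_comp_iff measurable_const).1 (integrable_const (1 : ℝ))

theorem ae_integrable_mul [SFinite ν] [SFinite μ] (hXY : HasJointDensity X Y k P ν μ)
    (hφ : Measurable φ) (hφ_int : Integrable (fun ω => φ (X ω, Y ω)) P) :
    ∀ᵐ x ∂ν, Integrable (fun y => φ (x, y) * k (x, y)) μ :=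
  ((hXY.integrable_comp_iff hφ).1 hφ_int).prod_right_ae

theorem setIntegral_preimage [SFinite ν] [SFinite μ] (hXY : HasJointDensity X Y k P ν μ)
    (hφ : Measurable φ) (hφ_int : Integrable (fun ω => φ (X ω, Y ω)) P) {A : Set E}
    (hA : MeasurableSet A) :
    ∫ ω in X ⁻¹' A, φ (X ω, Y ω) ∂P = ∫ x in A, ∫ y, φ (x, y) * k (x, y) ∂μ ∂ν := by
  have hpre : X ⁻¹' A = (fun ω => (X ω, Y ω)) ⁻¹' (A ×ˢ Set.univ) := by ext; simp
  rw [hpre, ← setIntegral_map (hA.prod .univ) hφ.aestronglyMeasurable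
      (hXY.measurable_left.prodMk hXY.measurable_right).aemeasurable,
    hXY.map_eq, setIntegral_withDensity_eq_setIntegral_toReal_smul
      hXY.measurable_density.ennreal_ofReal (.of_forall fun _ => ENNReal.ofReal_lt_top) φ
      (hA.prod .univ)]
  simp only [ENNReal.toReal_ofReal (hXY.density_nonneg _), smul_eq_mul, mul_comm (k _)]
  rw [setIntegral_prod _ ((hXY.integrable_comp_iff hφ).1 hφ_int).integrableOn,
    Measure.restrict_univ]

theorem map_left_eq_withDensity [IsFiniteMeasure P] [SFinite ν] [SFinite μ]
    (hXY : HasJointDensity X Y k P ν μ) :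
    P.map X = ν.withDensity fun x => ENNReal.ofReal (∫ y, k (x, y) ∂μ) := by
  ext A hA
  have hmass := hXY.setIntegral_preimage measurable_const (integrable_const (1 : ℝ)) hA
  simp only [setIntegral_const, smul_eq_mul, mul_one, one_mul] at hmass
  rw [Measure.map_apply hXY.measurable_left hA, withDensity_apply _ hA, ← ofReal_measureReal,
    hmass, ofReal_integral_eq_lintegral_ofReal
      hXY.integrable_density.integral_prod_left.integrableOn
      (.of_forall fun x => integral_nonneg fun y => hXY.density_nonneg _)]

theorem condExp_comap_ae_eq [IsFiniteMeasure P] [SFinite ν] [SFinite μ]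
    (hXY : HasJointDensity X Y k P ν μ) (hφ : Measurable φ)
    (hφ_int : Integrable (fun ω => φ (X ω, Y ω)) P) :
    P[fun ω => φ (X ω, Y ω) | mE.comap X] =ᵐ[P]
      fun ω => (∫ y, φ (X ω, y) * k (X ω, y) ∂μ) / ∫ y, k (X ω, y) ∂μ := by
  set ψ : E → ℝ := fun x => (∫ y, φ (x, y) * k (x, y) ∂μ) / ∫ y, k (x, y) ∂μ
  have hk := hXY.measurable_density
  have hψ_meas : Measurable ψ :=
    ((hφ.mul hk).stronglyMeasurable.integral_prod_right').measurable.div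
      hk.stronglyMeasurable.integral_prod_right'.measurable
  -- where the normalising integral vanishes, `k (x, ·) = 0` a.e., so the numerator vanishes too
  have hψ_mul : ∀ᵐ x ∂ν, ψ x * ∫ y, k (x, y) ∂μ = ∫ y, φ (x, y) * k (x, y) ∂μ := by
    filter_upwards [hXY.integrable_density.prod_right_ae] with x hkx
    rcases eq_or_ne (∫ y, k (x, y) ∂μ) 0 with hzero | hne
    · have hk_zero :=
        (integral_eq_zero_iff_of_nonneg (fun y => hXY.density_nonneg (x, y)) hkx).1 hzero
      rw [hzero, mul_zero, eq_comm]
      exact integral_eq_zero_of_ae (hk_zero.mono fun y hy => by simp [hy])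
    · exact div_mul_cancel₀ _ hne
  have hψ_int : Integrable (fun ω => ψ (X ω)) P := by
    refine (hXY.integrable_comp_iff (φ := fun z => ψ z.1) (hψ_meas.comp measurable_fst)).2 ?_
    refine (integrable_prod_iff (by fun_prop)).2
      ⟨hXY.integrable_density.prod_right_ae.mono fun x hx => hx.const_mul (ψ x),
        ((hXY.integrable_comp_iff hφ).1 hφ_int).integral_prod_left.norm.congr ?_⟩
    filter_upwards [hψ_mul] with x hx
    simp only [norm_mul, Real.norm_eq_abs, abs_of_nonneg (hXY.density_nonneg _)]
    rw [integral_const_mul, ← hx, abs_mul,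
      abs_of_nonneg (integral_nonneg fun y => hXY.density_nonneg (x, y))]
  refine (ae_eq_condExp_of_forall_setIntegral_eq hXY.measurable_left.comap_le hφ_int
    (fun _ _ _ => hψ_int.integrableOn) ?_
    (hψ_meas.comp (comap_measurable X)).aestronglyMeasurable).symm
  rintro _ ⟨A, hA, rfl⟩ _
  rw [hXY.setIntegral_preimage (φ := fun z => ψ z.1) (hψ_meas.comp measurable_fst) hψ_int hA,
    hXY.setIntegral_preimage hφ hφ_int hA]
  refine setIntegral_congr_ae hA (hψ_mul.mono fun x hx _ => ?_)
  rw [← hx, ← integral_const_mul]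

end HasJointDensity

end JointDensity

theorem bayes_premium_random_shift_general
    {Ω : Type*} [MeasureSpace Ω] [IsProbabilityMeasure (ℙ : Measure Ω)] {d : ℕ}
    (Θ Y : Ω → (Fin d → ℝ)) (hΘmeas : Measurable Θ) (hYmeas : Measurable Y)
    (hindep : IndepFun Θ Y ℙ)
    (h : (Fin d → ℝ) → ℝ) (hh_meas : Measurable h) (hh_nonneg : ∀ x, 0 ≤ h x)
    (hΘ : Measure.map Θ ℙ = volume.withDensity fun x => ENNReal.ofReal (h x))
    (hΘ_int : Integrable Θ ℙ)
    (X : Ω → (Fin d → ℝ)) (hX : X = fun ω => Θ ω + Y ω)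
    (g : (Fin d → ℝ) → (Fin d → ℝ))
    (hg : g = fun x i =>
      x i - (∫ ω, Y ω i * h (x - Y ω) ∂ℙ) / (∫ ω, h (x - Y ω) ∂ℙ)) :
    ∀ i : Fin d,
      (ℙ : Measure Ω)[fun ω => Θ ω i |
          MeasurableSpace.comap X (inferInstance : MeasurableSpace (Fin d → ℝ))] =ᵐ[ℙ]
        fun ω => g (X ω) i := by
  intro i
  subst hX hg
  have hXY := hindep.hasJointDensity_add hΘmeas hYmeas hh_meas hh_nonneg hΘ
  have hφ : Measurable fun z : (Fin d → ℝ) × (Fin d → ℝ) => z.1 i - z.2 i := by fun_prop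
  have hΘ_eq : (fun ω => Θ ω i) = fun ω => (Θ ω + Y ω) i - Y ω i := by funext ω; simp
  have hφ_int : Integrable (fun ω => (Θ ω + Y ω) i - Y ω i) ℙ := hΘ_eq ▸ hΘ_int.eval i
  have hψ : ∀ᵐ x ∂(Measure.map (fun ω => Θ ω + Y ω) ℙ),
      (∫ y, (x i - y i) * h (x - y) ∂(Measure.map Y ℙ)) / ∫ y, h (x - y) ∂(Measure.map Y ℙ) =
        x i - (∫ ω, Y ω i * h (x - Y ω) ∂ℙ) / ∫ ω, h (x - Y ω) ∂ℙ := by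
    rw [hXY.map_left_eq_withDensity, ae_withDensity_iff
      hXY.measurable_density.stronglyMeasurable.integral_prod_right'.measurable.ennreal_ofReal]
    filter_upwards [hXY.integrable_density.prod_right_ae, hXY.ae_integrable_mul hφ hφ_int]
      with x hkx hφkx hpos
    rw [integral_sub_mul_div_integral hkx hφkx (ENNReal.ofReal_pos.1 (pos_iff_ne_zero.2 hpos)).ne',
      integral_map hYmeas.aemeasurable (Measurable.aestronglyMeasurable (by fun_prop)),
      integral_map hYmeas.aemeasurable (Measurable.aestronglyMeasurable (by fun_prop))]
  rw [hΘ_eq]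
  filter_upwards [hXY.condExp_comap_ae_eq hφ hφ_int,
    ae_of_ae_map hXY.measurable_left.aemeasurable hψ] with ω hω hψω
  rw [hω, hψω]

/-- **Bayesian premium in a general random shift model.**
If `Θ` has Lebesgue density `h`, `Y` is independent of `Θ` with a Lebesgue density,
`X = Θ + Y`, `Θ` and `Y` are integrable, and for a.e. `x` we have
`E[h(x − Y)] ∈ (0, ∞)` and `E[‖Y‖ h(x − Y)] < ∞`, then almost surely
`E[Θ | X] = g(X)` where `g(x) = x − E[Y h(x − Y)] / E[h(x − Y)]` (componentwise). -/
theorem bayes_premium_random_shift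
    {Ω : Type*} [MeasureSpace Ω] [IsProbabilityMeasure (ℙ : Measure Ω)] {d : ℕ}
    (Θ Y : Ω → (Fin d → ℝ)) (hΘmeas : Measurable Θ) (hYmeas : Measurable Y)
    (hindep : IndepFun Θ Y ℙ)
    (h : (Fin d → ℝ) → ℝ) (hh_meas : Measurable h) (hh_nonneg : ∀ x, 0 ≤ h x)
    (hΘ : Measure.map Θ ℙ = volume.withDensity fun x => ENNReal.ofReal (h x))
    (hY_ac : Measure.map Y ℙ ≪ volume)
    (hΘ_int : Integrable Θ ℙ) (hY_int : Integrable Y ℙ)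
    (hden : ∀ᵐ x ∂(volume : Measure (Fin d → ℝ)),
      Integrable (fun ω => h (x - Y ω)) ℙ ∧ 0 < ∫ ω, h (x - Y ω) ∂ℙ ∧
        Integrable (fun ω => ‖Y ω‖ * h (x - Y ω)) ℙ)
    (X : Ω → (Fin d → ℝ)) (hX : X = fun ω => Θ ω + Y ω)
    (g : (Fin d → ℝ) → (Fin d → ℝ))
    (hg : g = fun x i =>
      x i - (∫ ω, Y ω i * h (x - Y ω) ∂ℙ) / (∫ ω, h (x - Y ω) ∂ℙ)) :
    ∀ i : Fin d,
      (ℙ : Measure Ω)[fun ω => Θ ω i |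
          MeasurableSpace.comap X (inferInstance : MeasurableSpace (Fin d → ℝ))] =ᵐ[ℙ]
        fun ω => g (X ω) i :=
  bayes_premium_random_shift_general Θ Y hΘmeas hYmeas hindep h hh_meas hh_nonneg hΘ hΘ_int X hX g
    hg
end

section
/- Let Θ be a random vector in ℝ^d whose law has density h with respect to Lebesgue measure, and let Y be an independent ℝ^d-valued random vector whose law has a Lebesgue density and which is symmetric, i.e., Y and −Y have the same distribution. Set X = Θ + Y. Assume Θ and Y are integrable and that for Lebesgue-almost every x the quantities E[h(x + Y)] ∈ (0, ∞) and E[‖Y‖ h(x + Y)] < ∞. Then, almost surely, E[Θ | X] = g(X), where g(x) = x + E[Y h(x + Y)] / E[h(x + Y)]. -/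
open MeasureTheory ProbabilityTheory
open scoped ENNReal NNReal

/-!
By independence and translation invariance of Lebesgue measure, the pair `(X, Y) = (Θ + Y, Y)`
has density `h (x - y)` with respect to `volume ⊗ law(Y)`. For a pair with a density `ρ` against a
product measure, Bayes' formula identifies `E[φ(X, Y) | X]` with the `ρ (X, ·)`-weighted mean of
`φ (X, ·)`. For `φ (x, y) = x - y`, the symmetry of `Y` turns the weights `h (x - y)` into
`h (x + y)`, and the weighted mean of `x + y` is `g x`.
-/

namespace MeasureTheory.Measure

variable {α β : Type*} [MeasurableSpace α] [MeasurableSpace β] {μ : Measure α} {ν : Measure β}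
  [SFinite μ] [SFinite ν]

theorem map_fst_withDensity_prod {f : α × β → ℝ≥0∞} (hf : Measurable f) :
    ((μ.prod ν).withDensity f).map Prod.fst = μ.withDensity fun x => ∫⁻ y, f (x, y) ∂ν := by
  ext s hs
  rw [map_apply measurable_fst hs, ← Set.prod_univ, withDensity_apply _ (hs.prod .univ),
    withDensity_apply _ hs, setLIntegral_prod _ hf.aemeasurable]
  simp

theorem map_add_prod_withDensity {G : Type*} [AddGroup G] [MeasurableSpace G] [MeasurableAdd₂ G]
    [MeasurableNeg G] (μ ν : Measure G) [SFinite μ] [SFinite ν] [μ.IsAddRightInvariant]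
    {f : G → ℝ≥0∞} (hf : Measurable f) :
    ((μ.withDensity f).prod ν).map (fun z => (z.1 + z.2, z.2)) =
      (μ.prod ν).withDensity fun z => f (z.1 - z.2) := by
  have hshear : Measurable fun z : G × G => (z.1 + z.2, z.2) := by fun_prop
  refine ext_of_lintegral _ fun φ hφ => ?_
  rw [prod_withDensity_left hf, lintegral_map hφ hshear,
    lintegral_withDensity_eq_lintegral_mul _ (by fun_prop) (by fun_prop),
    lintegral_withDensity_eq_lintegral_mul _ (by fun_prop) hφ,
    ← (measurePreserving_sub_prod μ ν).lintegral_comp (by fun_prop)]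
  simp

end MeasureTheory.Measure

namespace ProbabilityTheory

variable {Ω α β E : Type*} {mΩ : MeasurableSpace Ω} {P : Measure Ω} {mα : MeasurableSpace α}
  [MeasurableSpace β] {μ : Measure α} {ν : Measure β}

theorem IndepFun.map_add_prod_eq_withDensity {G : Type*} [AddGroup G] {mG : MeasurableSpace G}
    [MeasurableAdd₂ G] [MeasurableNeg G] {μ : Measure G} [SFinite μ] [μ.IsAddRightInvariant]
    [IsFiniteMeasure P] {Θ Y : Ω → G} (hindep : IndepFun Θ Y P) (hΘ : Measurable Θ)
    (hY : Measurable Y) {f : G → ℝ≥0∞} (hf : Measurable f) (hlaw : P.map Θ = μ.withDensity f) :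
    P.map (fun ω => (Θ ω + Y ω, Y ω)) = (μ.prod (P.map Y)).withDensity fun z => f (z.1 - z.2) := by
  rw [← Measure.map_add_prod_withDensity μ _ hf, ← hlaw,
    ← (indepFun_iff_map_prod_eq_prod_map_map hΘ.aemeasurable hY.aemeasurable).1 hindep,
    Measure.map_map (by fun_prop) (hΘ.prodMk hY)]
  rfl

theorem map_eq_withDensity_of_map_prod_eq_withDensity [SFinite μ] [SFinite ν] {X : Ω → α}
    {Y : Ω → β} (hX : Measurable X) (hY : Measurable Y) {f : α × β → ℝ≥0∞} (hf : Measurable f)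
    (hlaw : P.map (fun ω => (X ω, Y ω)) = (μ.prod ν).withDensity f) :
    P.map X = μ.withDensity fun x => ∫⁻ y, f (x, y) ∂ν := by
  rw [← Measure.map_fst_withDensity_prod hf, ← hlaw, Measure.map_map measurable_fst (hX.prodMk hY)]
  rfl

section PosteriorMean

variable [NormedAddCommGroup E] [NormedSpace ℝ E]

noncomputable def posteriorMean (ν : Measure β) (ρ : α × β → ℝ≥0) (φ : α × β → E) (x : α) : E :=
  (∫ y, (ρ (x, y) : ℝ) ∂ν)⁻¹ • ∫ y, ρ (x, y) • φ (x, y) ∂ν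

theorem stronglyMeasurable_posteriorMean [SFinite ν] {ρ : α × β → ℝ≥0} (hρ : Measurable ρ)
    {φ : α × β → E} (hφ : StronglyMeasurable φ) : StronglyMeasurable (posteriorMean ν ρ φ) :=
  have hden := hρ.coe_nnreal_real.stronglyMeasurable.integral_prod_right' (ν := ν)
  hden.measurable.inv.stronglyMeasurable.smul (hρ.stronglyMeasurable.smul hφ).integral_prod_right'

theorem toReal_lintegral_smul_posteriorMean {ρ : α × β → ℝ≥0} (hρ : Measurable ρ)
    (φ : α × β → E) {x : α} (hx : ∫⁻ y, ρ (x, y) ∂ν < ∞) :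
    (∫⁻ y, ρ (x, y) ∂ν).toReal • posteriorMean ν ρ φ x = ∫ y, ρ (x, y) • φ (x, y) ∂ν := by
  have hρx : Measurable fun y => (ρ (x, y) : ℝ≥0∞) :=
    (hρ.comp measurable_prodMk_left).coe_nnreal_ennreal
  rcases eq_or_ne (∫⁻ y, ρ (x, y) ∂ν) 0 with h0 | h0
  · have hzero : (fun y => (ρ (x, y) : ℝ≥0∞)) =ᵐ[ν] 0 := (lintegral_eq_zero_iff hρx).1 h0
    rw [h0, ENNReal.toReal_zero, zero_smul, eq_comm]
    refine integral_eq_zero_of_ae ?_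
    filter_upwards [hzero] with y hy
    simp [ENNReal.coe_eq_zero.1 hy]
  · have hden : ∫ y, (ρ (x, y) : ℝ) ∂ν = (∫⁻ y, ρ (x, y) ∂ν).toReal := by
      simpa using integral_toReal hρx.aemeasurable (ae_of_all _ fun y => ENNReal.coe_lt_top)
    rw [posteriorMean, hden, smul_inv_smul₀ (ENNReal.toReal_ne_zero.2 ⟨h0, hx.ne⟩)]

variable {X : Ω → α} {Y : Ω → β} {ρ : α × β → ℝ≥0} {φ : α × β → E}

theorem integrable_smul_of_map_prod_eq_withDensity (hX : Measurable X) (hY : Measurable Y)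
    (hρ : Measurable ρ) (hφ : StronglyMeasurable φ)
    (hlaw : P.map (fun ω => (X ω, Y ω)) = (μ.prod ν).withDensity fun z => ρ z)
    (hint : Integrable (fun ω => φ (X ω, Y ω)) P) :
    Integrable (fun z => ρ z • φ z) (μ.prod ν) := by
  rw [← integrable_withDensity_iff_integrable_smul hρ, ← hlaw]
  exact (integrable_map_measure hφ.aestronglyMeasurable (hX.prodMk hY).aemeasurable).2 hint

variable [SFinite μ] [SFinite ν]

theorem setIntegral_preimage_eq_setIntegral_integral_smul (hX : Measurable X)
    (hY : Measurable Y) (hρ : Measurable ρ) (hφ : StronglyMeasurable φ)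
    (hlaw : P.map (fun ω => (X ω, Y ω)) = (μ.prod ν).withDensity fun z => ρ z)
    (hint : Integrable (fun ω => φ (X ω, Y ω)) P) {A : Set α} (hA : MeasurableSet A) :
    ∫ ω in X ⁻¹' A, φ (X ω, Y ω) ∂P = ∫ x in A, ∫ y, ρ (x, y) • φ (x, y) ∂ν ∂μ := by
  rw [← Measure.restrict_univ (μ := ν), ← setIntegral_prod _
    (integrable_smul_of_map_prod_eq_withDensity hX hY hρ hφ hlaw hint).integrableOn,
    ← setIntegral_withDensity_eq_setIntegral_smul hρ _ (hA.prod .univ), ← hlaw,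
    setIntegral_map (hA.prod .univ) hφ.aestronglyMeasurable (hX.prodMk hY).aemeasurable,
    Set.mk_preimage_prod, Set.preimage_univ, Set.inter_univ]

theorem condExp_comap_ae_eq_posteriorMean [CompleteSpace E] [IsFiniteMeasure P]
    (hX : Measurable X) (hY : Measurable Y) (hρ : Measurable ρ) (hφ : StronglyMeasurable φ)
    (hlaw : P.map (fun ω => (X ω, Y ω)) = (μ.prod ν).withDensity fun z => ρ z)
    (hint : Integrable (fun ω => φ (X ω, Y ω)) P) :
    P[fun ω => φ (X ω, Y ω) | mα.comap X] =ᵐ[P] fun ω => posteriorMean ν ρ φ (X ω) := by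
  set D : α → ℝ≥0∞ := fun x => ∫⁻ y, ρ (x, y) ∂ν
  have hD : Measurable D := hρ.coe_nnreal_ennreal.lintegral_prod_right'
  have hlawX : P.map X = μ.withDensity D :=
    map_eq_withDensity_of_map_prod_eq_withDensity hX hY (f := fun z => ρ z)
      hρ.coe_nnreal_ennreal hlaw
  have hD_lt_top : ∀ᵐ x ∂μ, D x < ∞ := by
    refine ae_lt_top hD ?_
    rw [← setLIntegral_univ, ← withDensity_apply _ .univ, ← hlawX]
    exact measure_ne_top _ _
  have hψ := stronglyMeasurable_posteriorMean (ν := ν) hρ hφ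
  have hDψ : (fun x => (D x).toReal • posteriorMean ν ρ φ x) =ᵐ[μ]
      fun x => ∫ y, ρ (x, y) • φ (x, y) ∂ν := by
    filter_upwards [hD_lt_top] with x hx using toReal_lintegral_smul_posteriorMean hρ φ hx
  have hm : mα.comap X ≤ mΩ := hX.comap_le
  have : IsFiniteMeasure (P.trim hm) := isFiniteMeasure_trim hm
  refine (ae_eq_condExp_of_forall_setIntegral_eq hm hint (fun s _ _ => ?_) ?_
    (hψ.comp_measurable (comap_measurable X)).aestronglyMeasurable).symm
  · refine ((integrable_map_measure hψ.aestronglyMeasurable hX.aemeasurable).1 ?_).integrableOn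
    rw [hlawX, integrable_withDensity_iff_integrable_smul' hD hD_lt_top]
    exact (integrable_smul_of_map_prod_eq_withDensity hX hY hρ hφ hlaw hint).integral_prod_left
      |>.congr hDψ.symm
  · rintro _ ⟨A, hA, rfl⟩ -
    simp only [Function.comp_apply]
    rw [setIntegral_preimage_eq_setIntegral_integral_smul hX hY hρ hφ hlaw hint hA,
      ← setIntegral_map hA hψ.aestronglyMeasurable hX.aemeasurable, hlawX,
      setIntegral_withDensity_eq_setIntegral_toReal_smul hD (ae_restrict_of_ae hD_lt_top) _ hA]
    exact setIntegral_congr_ae hA (hDψ.mono fun x hx _ => hx)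

end PosteriorMean

theorem posteriorMean_sub_eq {d : ℕ} {ν : Measure (Fin d → ℝ)} [ν.IsNegInvariant]
    {h : (Fin d → ℝ) → ℝ} (hh_nonneg : ∀ x, 0 ≤ h x) {x : Fin d → ℝ}
    (hp : Integrable (fun y => h (x + y)) ν) (hp0 : ∫ y, h (x + y) ∂ν ≠ 0)
    (hq : Integrable (fun y => ‖y‖ * h (x + y)) ν) (i : Fin d) :
    posteriorMean ν (fun z => (h (z.1 - z.2)).toNNReal) (fun z => (z.1 - z.2) i) x =
      x i + (∫ y, y i * h (x + y) ∂ν) / ∫ y, h (x + y) ∂ν := by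
  have hqi : Integrable (fun y => y i * h (x + y)) ν := by
    refine hq.mono' ((continuous_apply i).aestronglyMeasurable.mul hp.1) (ae_of_all _ fun y => ?_)
    rw [norm_mul, Real.norm_of_nonneg (hh_nonneg _)]
    exact mul_le_mul_of_nonneg_right (norm_le_pi_norm y i) (hh_nonneg _)
  have hden : ∫ y, ((h (x - y)).toNNReal : ℝ) ∂ν = ∫ y, h (x + y) ∂ν := by
    simp_rw [Real.coe_toNNReal _ (hh_nonneg _), sub_eq_add_neg]
    exact integral_neg_eq_self (fun y => h (x + y)) ν
  have hnum : ∫ y, (h (x - y)).toNNReal • (x - y) i ∂ν =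
      x i * ∫ y, h (x + y) ∂ν + ∫ y, y i * h (x + y) ∂ν := by
    simp_rw [NNReal.smul_def, Real.coe_toNNReal _ (hh_nonneg _), smul_eq_mul, sub_eq_add_neg]
    rw [integral_neg_eq_self (fun y => h (x + y) * (x + y) i) ν, ← integral_const_mul,
      ← integral_add (hp.const_mul _) hqi]
    simp only [Pi.add_apply]
    congr 1
    ext y
    ring
  rw [posteriorMean, hden, hnum, smul_eq_mul]
  field_simp

theorem posteriorMean_map_sub_eq {d : ℕ} {Y : Ω → Fin d → ℝ}
    (hY : Measurable Y) [(P.map Y).IsNegInvariant] {h : (Fin d → ℝ) → ℝ} (hh : Measurable h)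
    (hh_nonneg : ∀ x, 0 ≤ h x) {x : Fin d → ℝ} (hp : Integrable (fun ω => h (x + Y ω)) P)
    (hp0 : ∫ ω, h (x + Y ω) ∂P ≠ 0) (hq : Integrable (fun ω => ‖Y ω‖ * h (x + Y ω)) P)
    (i : Fin d) :
    posteriorMean (P.map Y) (fun z => (h (z.1 - z.2)).toNNReal) (fun z => (z.1 - z.2) i) x =
      x i + (∫ ω, Y ω i * h (x + Y ω) ∂P) / ∫ ω, h (x + Y ω) ∂P := by
  have hmap {f : (Fin d → ℝ) → ℝ} (hf : Measurable f) :
      (Integrable f (P.map Y) ↔ Integrable (fun ω => f (Y ω)) P) ∧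
        ∫ y, f y ∂P.map Y = ∫ ω, f (Y ω) ∂P :=
    ⟨integrable_map_measure hf.aestronglyMeasurable hY.aemeasurable,
      integral_map hY.aemeasurable hf.aestronglyMeasurable⟩
  have hp' := hmap (f := fun y => h (x + y)) (by fun_prop)
  have hq' := hmap (f := fun y => ‖y‖ * h (x + y)) (by fun_prop)
  rw [← hp'.2] at hp0
  rw [posteriorMean_sub_eq hh_nonneg (hp'.1.2 hp) hp0 (hq'.1.2 hq), hp'.2,
    (hmap (f := fun y => y i * h (x + y)) (by fun_prop)).2]

end ProbabilityTheory

theorem bayes_premium_random_shift_symmetric_general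
    {Ω : Type*} [MeasureSpace Ω] [IsProbabilityMeasure (ℙ : Measure Ω)] {d : ℕ}
    (Θ Y : Ω → (Fin d → ℝ)) (hΘmeas : Measurable Θ) (hYmeas : Measurable Y)
    (hindep : IndepFun Θ Y ℙ)
    (h : (Fin d → ℝ) → ℝ) (hh_meas : Measurable h) (hh_nonneg : ∀ x, 0 ≤ h x)
    (hΘ : Measure.map Θ ℙ = volume.withDensity fun x => ENNReal.ofReal (h x))
    (hY_symm : Measure.map Y ℙ = Measure.map (fun ω => -Y ω) ℙ)
    (hΘ_int : Integrable Θ ℙ)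
    (hden : ∀ᵐ x ∂(volume : Measure (Fin d → ℝ)),
      Integrable (fun ω => h (x + Y ω)) ℙ ∧ 0 < ∫ ω, h (x + Y ω) ∂ℙ ∧
        Integrable (fun ω => ‖Y ω‖ * h (x + Y ω)) ℙ)
    (X : Ω → (Fin d → ℝ)) (hX : X = fun ω => Θ ω + Y ω)
    (g : (Fin d → ℝ) → (Fin d → ℝ))
    (hg : g = fun x i =>
      x i + (∫ ω, Y ω i * h (x + Y ω) ∂ℙ) / (∫ ω, h (x + Y ω) ∂ℙ)) :
    ∀ i : Fin d,
      (ℙ : Measure Ω)[fun ω => Θ ω i |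
          MeasurableSpace.comap X (inferInstance : MeasurableSpace (Fin d → ℝ))] =ᵐ[ℙ]
        fun ω => g (X ω) i := by
  intro i
  subst hX hg
  have : ((ℙ : Measure Ω).map Y).IsNegInvariant :=
    ⟨by rw [Measure.neg_def, Measure.map_map measurable_neg hYmeas]; exact hY_symm.symm⟩
  have hXmeas : Measurable fun ω => Θ ω + Y ω := hΘmeas.add hYmeas
  have hlaw := hindep.map_add_prod_eq_withDensity hΘmeas hYmeas hh_meas.ennreal_ofReal hΘ
  have hX_ac : (ℙ : Measure Ω).map (fun ω => Θ ω + Y ω) ≪ volume := by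
    rw [map_eq_withDensity_of_map_prod_eq_withDensity hXmeas hYmeas (by fun_prop) hlaw]
    exact withDensity_absolutelyContinuous _ _
  have hg_eq : ∀ᵐ x ∂volume,
      posteriorMean ((ℙ : Measure Ω).map Y) (fun z => (h (z.1 - z.2)).toNNReal)
        (fun z => (z.1 - z.2) i) x =
      x i + (∫ ω, Y ω i * h (x + Y ω) ∂ℙ) / ∫ ω, h (x + Y ω) ∂ℙ := by
    filter_upwards [hden] with x ⟨hp, hpos, hq⟩
    exact posteriorMean_map_sub_eq hYmeas hh_meas hh_nonneg hp hpos.ne' hq i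
  have hΘi : (fun ω => Θ ω i) = fun ω => (Θ ω + Y ω - Y ω) i := by simp
  rw [hΘi]
  exact (condExp_comap_ae_eq_posteriorMean (φ := fun z : (Fin d → ℝ) × _ => (z.1 - z.2) i)
    hXmeas hYmeas (by fun_prop) (by fun_prop) hlaw (hΘi ▸ hΘ_int.eval i)).trans
    (ae_of_ae_map hXmeas.aemeasurable (hX_ac.ae_le hg_eq))

/-- **Bayesian premium in a random shift model with symmetric shift.**
If `Θ` has Lebesgue density `h`, `Y` is independent of `Θ`, has a Lebesgue density and is
symmetric (`Y =ᵈ −Y`), `X = Θ + Y`, `Θ` and `Y` are integrable, and for a.e. `x` we have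
`E[h(x + Y)] ∈ (0, ∞)` and `E[‖Y‖ h(x + Y)] < ∞`, then almost surely
`E[Θ | X] = g(X)` where `g(x) = x + E[Y h(x + Y)] / E[h(x + Y)]` (componentwise). -/
theorem bayes_premium_random_shift_symmetric
    {Ω : Type*} [MeasureSpace Ω] [IsProbabilityMeasure (ℙ : Measure Ω)] {d : ℕ}
    (Θ Y : Ω → (Fin d → ℝ)) (hΘmeas : Measurable Θ) (hYmeas : Measurable Y)
    (hindep : IndepFun Θ Y ℙ)
    (h : (Fin d → ℝ) → ℝ) (hh_meas : Measurable h) (hh_nonneg : ∀ x, 0 ≤ h x)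
    (hΘ : Measure.map Θ ℙ = volume.withDensity fun x => ENNReal.ofReal (h x))
    (hY_ac : Measure.map Y ℙ ≪ volume)
    (hY_symm : Measure.map Y ℙ = Measure.map (fun ω => -Y ω) ℙ)
    (hΘ_int : Integrable Θ ℙ) (hY_int : Integrable Y ℙ)
    (hden : ∀ᵐ x ∂(volume : Measure (Fin d → ℝ)),
      Integrable (fun ω => h (x + Y ω)) ℙ ∧ 0 < ∫ ω, h (x + Y ω) ∂ℙ ∧
        Integrable (fun ω => ‖Y ω‖ * h (x + Y ω)) ℙ)
    (X : Ω → (Fin d → ℝ)) (hX : X = fun ω => Θ ω + Y ω)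
    (g : (Fin d → ℝ) → (Fin d → ℝ))
    (hg : g = fun x i =>
      x i + (∫ ω, Y ω i * h (x + Y ω) ∂ℙ) / (∫ ω, h (x + Y ω) ∂ℙ)) :
    ∀ i : Fin d,
      (ℙ : Measure Ω)[fun ω => Θ ω i |
          MeasurableSpace.comap X (inferInstance : MeasurableSpace (Fin d → ℝ))] =ᵐ[ℙ]
        fun ω => g (X ω) i :=
  bayes_premium_random_shift_symmetric_general Θ Y hΘmeas hYmeas hindep h hh_meas hh_nonneg hΘ
    hY_symm hΘ_int hden X hX g hg
end

section
/- Let a, q > 0, p_1, p_2, b_1, b_2 > 0. Let W_1 and W_2 be independent positive random variables with W_i^a distributed Gamma(p_i, b_i^{−a}), and let Θ be a positive random variable independent of (W_1, W_2) with P(Θ > x) > 0 for all x and regularly varying right tail of index −q, i.e., lim_{x→∞} P(Θ > tx)/P(Θ > x) = t^{−q} for every t > 0. Set X_i = Θ^{1/a} W_i. Then for any constants c_1, c_2 > 0, lim_{t→∞} P(X_1 > c_1 t, X_2 > c_2 t)/P(X_1 > t) = E[(min(W_1/c_1, W_2/c_2))^{aq}] / E[W_1^{aq}], and this limit is strictly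 positive and finite. -/
/-!
Put `Y = Θ^{1/a}`. Its tail `x ↦ P(Θ > x^a)` is regularly varying of index `-aq`, and the two
events are `{Y W₁ > t}` and `{Y min(W₁/c₁, W₂/c₂) > t}`. Breiman's lemma therefore gives
`P(Y V > t) ~ E[V^{aq}] P(Y > t)` for both `V = W₁` and `V = min(W₁/c₁, W₂/c₂)`, provided `V` is
independent of `Y` and has a moment of order `> aq`; Gamma variables have moments of every order,
and `min(W₁/c₁, W₂/c₂) ≤ W₁/c₁`.

Breiman's lemma is dominated convergence in `P(Y V > x)/P(Y > x) = E[F(x/V)/F(x)]`, `F` the tail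
of `Y`. The domination is Potter's bound `F(y) ≤ C (x/y)^s F(x)` (`y ≤ x`, `x` large, `s > aq`),
obtained by iterating the doubling estimate `F(x/2) ≤ 2^s F(x)` that regular variation gives
for large `x`.
-/

open MeasureTheory ProbabilityTheory Filter Set Topology

def IsRegularlyVarying (F : ℝ → ℝ) (ρ : ℝ) : Prop :=
  ∀ t : ℝ, 0 < t → Tendsto (fun x => F (t * x) / F x) atTop (𝓝 (t ^ ρ))

namespace IsRegularlyVarying

variable {F G : ℝ → ℝ} {ρ q : ℝ}

lemma congr' (hF : IsRegularlyVarying F ρ) (hFG : F =ᶠ[atTop] G) :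
    IsRegularlyVarying G ρ := by
  intro t ht
  refine (hF t ht).congr' ?_
  filter_upwards [hFG, (tendsto_id.const_mul_atTop ht).eventually hFG] with x hx htx
  simp only [id] at htx
  rw [hx, htx]

lemma comp_rpow (hF : IsRegularlyVarying F ρ) {a : ℝ} (ha : 0 < a) :
    IsRegularlyVarying (fun x => F (x ^ a)) (a * ρ) := by
  intro t ht
  have hlim := (hF (t ^ a) (Real.rpow_pos_of_pos ht a)).comp (tendsto_rpow_atTop ha)
  rw [← Real.rpow_mul ht.le] at hlim
  refine hlim.congr' ?_
  filter_upwards [eventually_ge_atTop 0] with x hx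
  simp only [Function.comp_apply, Real.mul_rpow ht.le hx]

lemma tendsto_div_div (hF : IsRegularlyVarying F (-q)) {v : ℝ} (hv : 0 < v) :
    Tendsto (fun x => F (x / v) / F x) atTop (𝓝 (v ^ q)) := by
  have hlim := hF v⁻¹ (inv_pos.mpr hv)
  rw [Real.inv_rpow hv.le, Real.rpow_neg hv.le, inv_inv] at hlim
  simpa only [inv_mul_eq_div] using hlim

lemma eventually_half_le (hF : IsRegularlyVarying F (-q)) (hpos : ∀ x, 0 < F x) {s : ℝ}
    (hqs : q < s) : ∀ᶠ x in atTop, F (x / 2) ≤ 2 ^ s * F x := by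
  have hlt : (2 : ℝ) ^ q < 2 ^ s := Real.rpow_lt_rpow_of_exponent_lt one_lt_two hqs
  filter_upwards [(hF.tendsto_div_div two_pos).eventually_lt_const hlt] with x hx
  exact ((div_lt_iff₀ (hpos x)).mp hx).le

end IsRegularlyVarying

lemma le_pow_mul_of_half_le {F : ℝ → ℝ} {D x₀ : ℝ} (hD : 0 ≤ D) (hx₀ : 0 ≤ x₀)
    (hhalf : ∀ x, x₀ ≤ x → F (x / 2) ≤ D * F x) :
    ∀ (k : ℕ) {x : ℝ}, x₀ * 2 ^ k ≤ x → F (x / 2 ^ (k + 1)) ≤ D ^ (k + 1) * F x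
  | 0, x, hx => by simpa using hhalf x (by simpa using hx)
  | k + 1, x, hx => by
    have hx₀x : x₀ ≤ x := le_trans (le_mul_of_one_le_right hx₀ (one_le_pow₀ one_le_two)) hx
    have hk : x₀ * 2 ^ k ≤ x / 2 := by rw [le_div_iff₀ two_pos, mul_assoc, ← pow_succ]; exact hx
    calc F (x / 2 ^ (k + 1 + 1)) = F (x / 2 / 2 ^ (k + 1)) := by rw [div_div, ← pow_succ']
      _ ≤ D ^ (k + 1) * F (x / 2) := le_pow_mul_of_half_le hD hx₀ hhalf k hk
      _ ≤ D ^ (k + 1) * (D * F x) := by gcongr; exact hhalf x hx₀x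
      _ = D ^ (k + 1 + 1) * F x := by ring

section Potter

variable {F : ℝ → ℝ} {s x₀ : ℝ}

lemma le_rpow_mul_of_half_le (hs : 0 ≤ s) (hx₀ : 0 < x₀) (hanti : Antitone F)
    (hpos : ∀ x, 0 < F x)
    (hhalf : ∀ x, x₀ ≤ x → F (x / 2) ≤ 2 ^ s * F x) {x y : ℝ} (hy : x₀ ≤ y) (hyx : y ≤ x) :
    F y ≤ 2 ^ s * (x / y) ^ s * F x := by
  have hy0 : 0 < y := hx₀.trans_le hy
  obtain ⟨k, hk, hk'⟩ := exists_nat_pow_near ((one_le_div hy0).mpr hyx) one_lt_two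
  have hkx : x₀ * 2 ^ k ≤ x := by
    calc x₀ * 2 ^ k ≤ y * (x / y) := by gcongr
      _ = x := by field_simp
  calc F y ≤ F (x / 2 ^ (k + 1)) := hanti ((div_lt_iff₀ (by positivity)).mpr
          (by rwa [div_lt_iff₀ hy0, mul_comm] at hk')).le
    _ ≤ (2 ^ s) ^ (k + 1) * F x :=
          le_pow_mul_of_half_le (by positivity) hx₀.le hhalf k hkx
    _ = 2 ^ s * ((2 : ℝ) ^ k) ^ s * F x := by
          rw [← Real.rpow_natCast, ← Real.rpow_natCast, ← Real.rpow_mul two_pos.le,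
            ← Real.rpow_mul two_pos.le, ← Real.rpow_add two_pos]; push_cast; ring_nf
    _ ≤ 2 ^ s * (x / y) ^ s * F x := by have := hpos x; gcongr

lemma potter_bound (hs : 0 ≤ s) (hx₀ : 0 < x₀) (hanti : Antitone F) (hpos : ∀ x, 0 < F x)
    (hhalf : ∀ x, x₀ ≤ x → F (x / 2) ≤ 2 ^ s * F x) {x y : ℝ} (hx : x₀ ≤ x) (hy : 0 < y)
    (hyx : y ≤ x) : F y ≤ F 0 / F x₀ * 2 ^ s * (x / y) ^ s * F x := by
  -- Below `x₀` only `F y ≤ F 0` is available; this is where the factor `F 0 / F x₀` comes from.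
  have hC : 1 ≤ F 0 / F x₀ := (one_le_div (hpos x₀)).mpr (hanti hx₀.le)
  have hbound : 0 ≤ 2 ^ s * (x / y) ^ s * F x := by
    have := hpos x; have : 0 < x := hy.trans_le hyx; positivity
  rcases le_or_gt x₀ y with hy₀ | hy₀
  · calc F y ≤ 2 ^ s * (x / y) ^ s * F x := le_rpow_mul_of_half_le hs hx₀ hanti hpos hhalf hy₀ hyx
      _ ≤ F 0 / F x₀ * (2 ^ s * (x / y) ^ s * F x) := le_mul_of_one_le_left hbound hC
      _ = _ := by ring
  · calc F y ≤ F 0 / F x₀ * F x₀ := by rw [div_mul_cancel₀ _ (hpos x₀).ne']; exact hanti hy.le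
      _ ≤ F 0 / F x₀ * (2 ^ s * (x / x₀) ^ s * F x) := by
          gcongr; exact le_rpow_mul_of_half_le hs hx₀ hanti hpos hhalf le_rfl hx
      _ ≤ F 0 / F x₀ * (2 ^ s * (x / y) ^ s * F x) := by
          have := hpos x; have := hpos x₀; have : 0 ≤ x := hx₀.le.trans hx
          gcongr
      _ = _ := by ring

end Potter

lemma lt_mul_min_div_iff {t y u w c₁ c₂ : ℝ} (hy : 0 ≤ y) (hc₁ : 0 < c₁) (hc₂ : 0 < c₂) :
    t < y * min (u / c₁) (w / c₂) ↔ c₁ * t < y * u ∧ c₂ * t < y * w := by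
  rw [mul_min_of_nonneg _ _ hy, lt_min_iff, ← mul_div_assoc, ← mul_div_assoc, lt_div_iff₀ hc₁,
    lt_div_iff₀ hc₂, mul_comm t, mul_comm t]

lemma integrable_rpow_gammaMeasure {p r s : ℝ} (hp : 0 < p) (hr : 0 < r) (hs : -p < s) :
    Integrable (fun x => x ^ s) (gammaMeasure p r) := by
  have hpdf : Measurable (gammaPDF p r) := (measurable_gammaPDFReal p r).ennreal_ofReal
  rw [gammaMeasure, integrable_withDensity_iff hpdf (ae_of_all _ fun _ => ENNReal.ofReal_lt_top)]
  have hker : IntegrableOn (fun x : ℝ => x ^ (s + p - 1) * Real.exp (-r * x)) (Ioi 0) := by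
    simpa using integrableOn_rpow_mul_exp_neg_mul_rpow (by linarith : -1 < s + p - 1) one_pos hr
  have hsupp : (fun x => x ^ s * (gammaPDF p r x).toReal)
      = (Ici 0).indicator (fun x => x ^ s * (gammaPDF p r x).toReal) := by
    refine (indicator_eq_self.mpr fun x hx => ?_).symm
    by_contra hneg
    simp [gammaPDF_of_neg (not_le.mp hneg)] at hx
  rw [hsupp, integrable_indicator_iff measurableSet_Ici, integrableOn_Ici_iff_integrableOn_Ioi]
  refine IntegrableOn.congr_fun (hker.const_mul (r ^ p / Real.Gamma p)) (fun x (hx : 0 < x) => ?_)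
    measurableSet_Ioi
  have hΓ := Real.Gamma_pos_of_pos hp
  rw [gammaPDF_of_nonneg hx.le, ENNReal.toReal_ofReal (by positivity),
    show s + p - 1 = s + (p - 1) by ring, Real.rpow_add hx]
  ring_nf

section RandomScale

variable {Ω : Type*} [MeasurableSpace Ω] {μ : Measure Ω}

lemma integral_pos_of_pos [NeZero μ] {f : Ω → ℝ} (hpos : ∀ x, 0 < f x) (hf : Integrable f μ) :
    0 < ∫ x, f x ∂μ := by
  have hsupp : Function.support f = univ := eq_univ_of_forall fun x => (hpos x).ne'
  rw [integral_pos_iff_support_of_nonneg (fun x => (hpos x).le) hf, hsupp]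
  exact Measure.measure_univ_pos.mpr (NeZero.ne μ)

lemma integrable_rpow_of_map_rpow_eq_gammaMeasure {W : Ω → ℝ} (hW : Measurable W)
    (hWnonneg : ∀ ω, 0 ≤ W ω) {a p r s : ℝ} (ha : 0 < a) (hp : 0 < p) (hr : 0 < r)
    (hlaw : μ.map (fun ω => W ω ^ a) = gammaMeasure p r) (hs : -(a * p) < s) :
    Integrable (fun ω => W ω ^ s) μ := by
  have hmom := integrable_rpow_gammaMeasure hp hr (s := s / a)
    (by rwa [lt_div_iff₀ ha, neg_mul, mul_comm])
  rw [← hlaw, integrable_map_measure (by fun_prop) (by fun_prop)] at hmom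
  refine hmom.congr (ae_of_all _ fun ω => ?_)
  simp only [Function.comp_apply, ← Real.rpow_mul (hWnonneg ω), mul_div_cancel₀ _ ha.ne']

lemma Integrable.rpow_of_le {f g : Ω → ℝ} {s : ℝ} (hs : 0 ≤ s) (hf : Measurable f)
    (hf0 : ∀ ω, 0 ≤ f ω) (hfg : ∀ ω, f ω ≤ g ω) (hg : Integrable (fun ω => g ω ^ s) μ) :
    Integrable (fun ω => f ω ^ s) μ := by
  refine hg.mono' (hf.pow_const s).aestronglyMeasurable (ae_of_all _ fun ω => ?_)
  rw [Real.norm_of_nonneg (Real.rpow_nonneg (hf0 ω) s)]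
  exact Real.rpow_le_rpow (hf0 ω) (hfg ω) hs

def survivalFun (μ : Measure Ω) (X : Ω → ℝ) (x : ℝ) : ℝ := (μ {ω | x < X ω}).toReal

lemma antitone_survivalFun [IsFiniteMeasure μ] (X : Ω → ℝ) : Antitone (survivalFun μ X) :=
  fun _ _ hxy => ENNReal.toReal_mono (measure_ne_top _ _)
    (measure_mono fun _ h => hxy.trans_lt h)

lemma survivalFun_pos [IsFiniteMeasure μ] {X : Ω → ℝ} (h : ∀ x, 0 < μ {ω | x < X ω})
    (x : ℝ) : 0 < survivalFun μ X x :=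
  ENNReal.toReal_pos (h x).ne' (measure_ne_top _ _)

lemma survivalFun_rpow_one_div {Θ : Ω → ℝ} (hΘ : ∀ ω, 0 ≤ Θ ω) {a x : ℝ} (ha : 0 < a)
    (hx : 0 ≤ x) : survivalFun μ (fun ω => Θ ω ^ (1 / a)) x = survivalFun μ Θ (x ^ a) := by
  simp only [survivalFun, one_div, Real.lt_rpow_inv_iff_of_pos hx (hΘ _) ha]

lemma survivalFun_rpow_one_div_pos {Θ : Ω → ℝ} (hΘ : ∀ ω, 0 ≤ Θ ω)
    (htail : ∀ x, 0 < μ {ω | x < Θ ω}) {a : ℝ} (ha : 0 < a) (x : ℝ) :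
    0 < μ {ω | x < Θ ω ^ (1 / a)} :=
  (htail (max x 0 ^ a)).trans_le <| measure_mono fun ω (hω : _ < Θ ω) =>
    (le_max_left x 0).trans_lt <| show max x 0 < Θ ω ^ (1 / a) by
      rwa [one_div, Real.lt_rpow_inv_iff_of_pos (le_max_right x 0) (hΘ ω) ha]

lemma IsRegularlyVarying.survivalFun_rpow_one_div {Θ : Ω → ℝ} {q : ℝ}
    (hrv : IsRegularlyVarying (survivalFun μ Θ) (-q)) (hΘ : ∀ ω, 0 ≤ Θ ω) {a : ℝ}
    (ha : 0 < a) : IsRegularlyVarying (survivalFun μ fun ω => Θ ω ^ (1 / a)) (-(a * q)) := by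
  rw [← mul_neg]
  refine (hrv.comp_rpow ha).congr' ?_
  filter_upwards [eventually_ge_atTop 0] with x hx
  exact (_root_.survivalFun_rpow_one_div hΘ ha hx).symm

lemma survivalFun_mul_eq_integral [IsProbabilityMeasure μ] {Θ V : Ω → ℝ} (hΘ : Measurable Θ)
    (hV : Measurable V) (hVpos : ∀ ω, 0 < V ω) (hind : IndepFun Θ V μ) (x : ℝ) :
    survivalFun μ (fun ω => Θ ω * V ω) x = ∫ ω, survivalFun μ Θ (x / V ω) ∂μ := by
  have hS : MeasurableSet {p : ℝ × ℝ | x < p.1 * p.2} :=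
    measurableSet_lt measurable_const (measurable_fst.mul measurable_snd)
  have hsection : Measurable fun v => μ.map Θ {θ | x < θ * v} :=
    measurable_measure_prodMk_right hS
  have hjoint := (indepFun_iff_map_prod_eq_prod_map_map hΘ.aemeasurable hV.aemeasurable).mp hind
  have hslice : ∀ ω, μ.map Θ {θ | x < θ * V ω} = μ {ω' | x / V ω < Θ ω'} := fun ω => by
    rw [Measure.map_apply hΘ
      (measurableSet_lt measurable_const (by fun_prop : Measurable fun θ : ℝ => θ * V ω))]
    simp only [preimage_ofPred_eq, div_lt_iff₀ (hVpos ω)]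
  calc survivalFun μ (fun ω => Θ ω * V ω) x
      = ((μ.map fun ω => (Θ ω, V ω)) {p | x < p.1 * p.2}).toReal := by
        rw [Measure.map_apply (hΘ.prodMk hV) hS]; rfl
    _ = (∫⁻ ω, μ.map Θ {θ | x < θ * V ω} ∂μ).toReal := by
        rw [hjoint, Measure.prod_apply_symm hS]
        exact congrArg ENNReal.toReal (lintegral_map hsection hV)
    _ = ∫ ω, survivalFun μ Θ (x / V ω) ∂μ := by
        rw [← integral_toReal (f := fun ω => μ.map Θ {θ | x < θ * V ω})
          (hsection.comp hV).aemeasurable (ae_of_all _ fun _ => measure_lt_top _ _)]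
        simp only [hslice, survivalFun]

theorem tendsto_survivalFun_mul_div_survivalFun [IsProbabilityMeasure μ] {Θ V : Ω → ℝ} {q s : ℝ}
    (hΘ : Measurable Θ) (hV : Measurable V) (hVpos : ∀ ω, 0 < V ω) (hind : IndepFun Θ V μ)
    (htail : ∀ x, 0 < μ {ω | x < Θ ω}) (hrv : IsRegularlyVarying (survivalFun μ Θ) (-q))
    (hq : 0 ≤ q) (hqs : q < s) (hmom : Integrable (fun ω => V ω ^ s) μ) :
    Tendsto (fun x => survivalFun μ (fun ω => Θ ω * V ω) x / survivalFun μ Θ x) atTop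
      (𝓝 (∫ ω, V ω ^ q ∂μ)) := by
  set F := survivalFun μ Θ
  have hpos : ∀ x, 0 < F x := survivalFun_pos htail
  have hanti : Antitone F := antitone_survivalFun Θ
  obtain ⟨x₁, hx₁⟩ := eventually_atTop.mp (hrv.eventually_half_le hpos hqs)
  set x₀ := max x₁ 1
  have hx₀ : 0 < x₀ := lt_max_of_lt_right one_pos
  have hhalf : ∀ x, x₀ ≤ x → F (x / 2) ≤ 2 ^ s * F x :=
    fun x hx => hx₁ x ((le_max_left _ _).trans hx)
  set C := F 0 / F x₀ * 2 ^ s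
  have hdom : ∀ x, x₀ ≤ x → ∀ v, 0 < v → F (x / v) / F x ≤ C * v ^ s + 1 := by
    intro x hx v hv
    have hx0 : 0 < x := hx₀.trans_le hx
    have hCv : 0 ≤ C * v ^ s := by have := hpos 0; have := hpos x₀; positivity
    rw [div_le_iff₀ (hpos x)]
    rcases le_or_gt v 1 with hv1 | hv1
    · calc F (x / v) ≤ F x := hanti (le_div_self hx0.le hv hv1)
        _ ≤ (C * v ^ s + 1) * F x := le_mul_of_one_le_left (hpos x).le (by linarith)
    · have hy : x / v ≤ x := div_le_self hx0.le hv1.le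
      calc F (x / v) ≤ C * (x / (x / v)) ^ s * F x :=
            potter_bound (hq.trans hqs.le) hx₀ hanti hpos hhalf hx (by positivity) hy
        _ = C * v ^ s * F x := by rw [div_div_cancel₀ hx0.ne']
        _ ≤ (C * v ^ s + 1) * F x := by have := hpos x; nlinarith
  have hdct : Tendsto (fun x => ∫ ω, F (x / V ω) / F x ∂μ) atTop (𝓝 (∫ ω, V ω ^ q ∂μ)) :=
    tendsto_integral_filter_of_dominated_convergence (fun ω => C * V ω ^ s + 1)
      (Eventually.of_forall fun x =>
        ((hanti.measurable.comp (measurable_const.div hV)).div_const _).aestronglyMeasurable)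
      (eventually_atTop.mpr ⟨x₀, fun x hx => ae_of_all _ fun ω => by
        rw [Real.norm_of_nonneg (div_pos (hpos _) (hpos x)).le]
        exact hdom x hx (V ω) (hVpos ω)⟩)
      ((hmom.const_mul C).add (integrable_const 1))
      (ae_of_all _ fun ω => hrv.tendsto_div_div (hVpos ω))
  refine hdct.congr fun x => ?_
  rw [integral_div, survivalFun_mul_eq_integral hΘ hV hVpos hind]

theorem tendsto_survivalFun_rpow_one_div_mul_div [IsProbabilityMeasure μ] {Θ V : Ω → ℝ}
    {a q s : ℝ} (ha : 0 < a) (hq : 0 ≤ q) (hΘ : Measurable Θ) (hΘnonneg : ∀ ω, 0 ≤ Θ ω)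
    (hV : Measurable V) (hVpos : ∀ ω, 0 < V ω) (hind : IndepFun Θ V μ)
    (htail : ∀ x, 0 < μ {ω | x < Θ ω}) (hrv : IsRegularlyVarying (survivalFun μ Θ) (-q))
    (hqs : a * q < s) (hmom : Integrable (fun ω => V ω ^ s) μ) :
    Tendsto (fun x => survivalFun μ (fun ω => Θ ω ^ (1 / a) * V ω) x /
      survivalFun μ (fun ω => Θ ω ^ (1 / a)) x) atTop (𝓝 (∫ ω, V ω ^ (a * q) ∂μ)) :=
  tendsto_survivalFun_mul_div_survivalFun (by fun_prop) hV hVpos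
    (hind.comp (by fun_prop : Measurable fun θ : ℝ => θ ^ (1 / a)) measurable_id)
    (survivalFun_rpow_one_div_pos hΘnonneg htail ha) (hrv.survivalFun_rpow_one_div hΘnonneg ha)
    (by positivity) hqs hmom

end RandomScale

theorem joint_tail_random_scale_regular_variation_general
    {Ω : Type*} [MeasureSpace Ω] [IsProbabilityMeasure (ℙ : Measure Ω)]
    (a q p₁ b₁ : ℝ) (ha : 0 < a) (hq : 0 < q)
    (hp₁ : 0 < p₁) (hb₁ : 0 < b₁)
    (W₁ W₂ : Ω → ℝ) (hW₁meas : Measurable W₁) (hW₂meas : Measurable W₂)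
    (hW₁pos : ∀ ω, 0 < W₁ ω) (hW₂pos : ∀ ω, 0 < W₂ ω)
    (hW₁ : Measure.map (fun ω => W₁ ω ^ a) ℙ = gammaMeasure p₁ (b₁ ^ (-a)))
    (Θ : Ω → ℝ) (hΘmeas : Measurable Θ) (hΘpos : ∀ ω, 0 < Θ ω)
    (hΘindep : IndepFun Θ (fun ω => (W₁ ω, W₂ ω)) ℙ)
    (hΘtail_pos : ∀ x : ℝ, 0 < ℙ {ω | x < Θ ω})
    (hΘrv : ∀ t : ℝ, 0 < t →
      Tendsto (fun x => (ℙ {ω | t * x < Θ ω}).toReal / (ℙ {ω | x < Θ ω}).toReal)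
        atTop (nhds (t ^ (-q))))
    (X₁ X₂ : Ω → ℝ) (hX₁ : X₁ = fun ω => Θ ω ^ (1 / a) * W₁ ω)
    (hX₂ : X₂ = fun ω => Θ ω ^ (1 / a) * W₂ ω)
    (c₁ c₂ : ℝ) (hc₁ : 0 < c₁) (hc₂ : 0 < c₂)
    (L : ℝ) (hL : L = (∫ ω, min (W₁ ω / c₁) (W₂ ω / c₂) ^ (a * q) ∂ℙ) /
      (∫ ω, W₁ ω ^ (a * q) ∂ℙ)) :
    Integrable (fun ω => W₁ ω ^ (a * q)) ℙ ∧
    Integrable (fun ω => min (W₁ ω / c₁) (W₂ ω / c₂) ^ (a * q)) ℙ ∧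
    0 < L ∧
    Tendsto (fun t => (ℙ {ω | c₁ * t < X₁ ω ∧ c₂ * t < X₂ ω}).toReal /
        (ℙ {ω | t < X₁ ω}).toReal) atTop (nhds L) := by
  subst hX₁ hX₂ hL
  set V : Ω → ℝ := fun ω => min (W₁ ω / c₁) (W₂ ω / c₂)
  have hVpos : ∀ ω, 0 < V ω := fun ω => lt_min (div_pos (hW₁pos ω) hc₁) (div_pos (hW₂pos ω) hc₂)
  have hW₁mom : ∀ s : ℝ, 0 ≤ s → Integrable (fun ω => W₁ ω ^ s) ℙ := fun s hs =>
    integrable_rpow_of_map_rpow_eq_gammaMeasure hW₁meas (fun ω => (hW₁pos ω).le) ha hp₁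
      (Real.rpow_pos_of_pos hb₁ _) hW₁ (by have := mul_pos ha hp₁; linarith)
  have hVmom : ∀ s : ℝ, 0 ≤ s → Integrable (fun ω => V ω ^ s) ℙ := fun s hs =>
    Integrable.rpow_of_le hs (by fun_prop) (fun ω => (hVpos ω).le) (fun ω => min_le_left _ _)
      (by simpa only [Real.div_rpow (hW₁pos _).le hc₁.le] using (hW₁mom s hs).div_const (c₁ ^ s))
  have hΘnonneg : ∀ ω, 0 ≤ Θ ω := fun ω => (hΘpos ω).le
  have haq : a * q < a * (q + 1) := mul_lt_mul_of_pos_left (lt_add_one q) ha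
  have hnum := tendsto_survivalFun_rpow_one_div_mul_div ha hq.le hΘmeas hΘnonneg
    (by fun_prop) hVpos (hΘindep.comp measurable_id
      (by fun_prop : Measurable fun w : ℝ × ℝ => min (w.1 / c₁) (w.2 / c₂))) hΘtail_pos hΘrv haq
    (hVmom _ (by positivity))
  have hden := tendsto_survivalFun_rpow_one_div_mul_div ha hq.le hΘmeas hΘnonneg
    hW₁meas hW₁pos (hΘindep.comp measurable_id measurable_fst) hΘtail_pos hΘrv haq
    (hW₁mom _ (by positivity))
  have hW₁int_pos := integral_pos_of_pos (fun ω => Real.rpow_pos_of_pos (hW₁pos ω) (a * q))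
    (hW₁mom _ (by positivity))
  refine ⟨hW₁mom _ (by positivity), hVmom _ (by positivity),
    div_pos (integral_pos_of_pos (fun ω => Real.rpow_pos_of_pos (hVpos ω) _)
      (hVmom _ (by positivity))) hW₁int_pos, (hnum.div hden hW₁int_pos.ne').congr fun t => ?_⟩
  have hY_tail := survivalFun_pos (survivalFun_rpow_one_div_pos hΘnonneg hΘtail_pos ha) t
  rw [Pi.div_apply, div_div_div_cancel_right₀ hY_tail.ne']
  simp only [survivalFun, V, lt_mul_min_div_iff (Real.rpow_nonneg (hΘnonneg _) _) hc₁ hc₂]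

/-- **Joint tail asymptotics in the MGB2-type random scale model.**
Let `W_1, W_2` be independent positive random variables with `W_i^a ∼ Gamma(p_i, b_i^{−a})`,
and let `Θ > 0` be independent of `(W_1, W_2)` with a regularly varying right tail of index
`−q`. Set `X_i = Θ^{1/a} W_i`. Then for constants `c_1, c_2 > 0`,
`P(X_1 > c_1 t, X_2 > c_2 t)/P(X_1 > t) → E[(min(W_1/c_1, W_2/c_2))^{aq}] / E[W_1^{aq}]`
as `t → ∞`, and this limit is strictly positive and finite. -/
theorem joint_tail_random_scale_regular_variation
    {Ω : Type*} [MeasureSpace Ω] [IsProbabilityMeasure (ℙ : Measure Ω)]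
    (a q p₁ p₂ b₁ b₂ : ℝ) (ha : 0 < a) (hq : 0 < q)
    (hp₁ : 0 < p₁) (hp₂ : 0 < p₂) (hb₁ : 0 < b₁) (hb₂ : 0 < b₂)
    (W₁ W₂ : Ω → ℝ) (hW₁meas : Measurable W₁) (hW₂meas : Measurable W₂)
    (hW₁pos : ∀ ω, 0 < W₁ ω) (hW₂pos : ∀ ω, 0 < W₂ ω)
    (hW₁ : Measure.map (fun ω => W₁ ω ^ a) ℙ = gammaMeasure p₁ (b₁ ^ (-a)))
    (hW₂ : Measure.map (fun ω => W₂ ω ^ a) ℙ = gammaMeasure p₂ (b₂ ^ (-a)))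
    (hWindep : IndepFun W₁ W₂ ℙ)
    (Θ : Ω → ℝ) (hΘmeas : Measurable Θ) (hΘpos : ∀ ω, 0 < Θ ω)
    (hΘindep : IndepFun Θ (fun ω => (W₁ ω, W₂ ω)) ℙ)
    (hΘtail_pos : ∀ x : ℝ, 0 < ℙ {ω | x < Θ ω})
    (hΘrv : ∀ t : ℝ, 0 < t →
      Tendsto (fun x => (ℙ {ω | t * x < Θ ω}).toReal / (ℙ {ω | x < Θ ω}).toReal)
        atTop (nhds (t ^ (-q))))
    (X₁ X₂ : Ω → ℝ) (hX₁ : X₁ = fun ω => Θ ω ^ (1 / a) * W₁ ω)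
    (hX₂ : X₂ = fun ω => Θ ω ^ (1 / a) * W₂ ω)
    (c₁ c₂ : ℝ) (hc₁ : 0 < c₁) (hc₂ : 0 < c₂)
    (L : ℝ) (hL : L = (∫ ω, min (W₁ ω / c₁) (W₂ ω / c₂) ^ (a * q) ∂ℙ) /
      (∫ ω, W₁ ω ^ (a * q) ∂ℙ)) :
    Integrable (fun ω => W₁ ω ^ (a * q)) ℙ ∧
    Integrable (fun ω => min (W₁ ω / c₁) (W₂ ω / c₂) ^ (a * q)) ℙ ∧
    0 < L ∧
    Tendsto (fun t => (ℙ {ω | c₁ * t < X₁ ω ∧ c₂ * t < X₂ ω}).toReal /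
        (ℙ {ω | t < X₁ ω}).toReal) atTop (nhds L) :=
  joint_tail_random_scale_regular_variation_general a q p₁ b₁ ha hq hp₁ hb₁ W₁ W₂ hW₁meas hW₂meas
    hW₁pos hW₂pos hW₁ Θ hΘmeas hΘpos hΘindep hΘtail_pos hΘrv X₁ X₂ hX₁ hX₂ c₁ c₂ hc₁ hc₂ L hL
end

section
/- (Breiman's lemma.) Let Θ be a positive random variable with P(Θ > x) > 0 for all x and regularly varying right tail of index −q for some q > 0, i.e., lim_{x→∞} P(Θ > tx)/P(Θ > x) = t^{−q} for every t > 0. Let W be a nonnegative random variable independent of Θ with E[W^{q+ε}] < ∞ for some ε > 0. Then lim_{t→∞} P(ΘW > t)/P(Θ > t) = E[W^q]. -/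
/-!
Write `G x = P(Θ > x)`. By independence, `P(ΘW > t) / G t = E[G (t / W) / G t]`, and the
integrand tends to `W ^ q` pointwise by regular variation. Iterating `G y ≤ 2 ^ r G (2y)`,
which holds for large `y` whenever `r > q`, gives Potter's bound `G x ≤ (2l) ^ r G (l x)`
for `x ≥ X`, `l ≥ 1`. For `t ≥ X` it dominates the integrand by `1 + K W ^ (q + ε)`: directly
when `t / W ≥ X`, and otherwise through the lower bound `G t ≳ (t / X) ^ (-r)` together with
`t / X ≤ W`. Dominated convergence concludes.
-/

open MeasureTheory ProbabilityTheory Filter Topology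

def RegularlyVarying (G : ℝ → ℝ) (ρ : ℝ) : Prop :=
  ∀ t : ℝ, 0 < t → Tendsto (fun x => G (t * x) / G x) atTop (𝓝 (t ^ ρ))

lemma le_pow_mul_apply_two_pow_mul {G : ℝ → ℝ} {b X₀ x : ℝ} (hb : 0 ≤ b)
    (hstep : ∀ y ≥ X₀, G y ≤ b * G (2 * y)) (hx₀ : 0 ≤ x) (hx : X₀ ≤ x) (n : ℕ) :
    G x ≤ b ^ n * G (2 ^ n * x) := by
  induction n with
  | zero => simp
  | succ n ih =>
    have hX₀ : X₀ ≤ 2 ^ n * x := hx.trans (le_mul_of_one_le_left hx₀ (one_le_pow₀ one_le_two))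
    calc G x ≤ b ^ n * G (2 ^ n * x) := ih
      _ ≤ b ^ n * (b * G (2 * (2 ^ n * x))) := by gcongr; exact hstep _ hX₀
      _ = b ^ (n + 1) * G (2 ^ (n + 1) * x) := by
        rw [← mul_assoc, ← pow_succ, ← mul_assoc, ← pow_succ']

namespace RegularlyVarying

variable {G : ℝ → ℝ} {ρ : ℝ}

lemma tendsto_apply_div_div (hG : RegularlyVarying G ρ) {w : ℝ} (hw : 0 < w) :
    Tendsto (fun x => G (x / w) / G x) atTop (𝓝 (w ^ (-ρ))) := by
  have h := hG w⁻¹ (inv_pos.2 hw)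
  rw [Real.inv_rpow hw.le, ← Real.rpow_neg hw.le] at h
  simpa only [inv_mul_eq_div] using h

lemma nonpos_of_antitone (hG : RegularlyVarying G ρ) (hpos : ∀ x, 0 < G x)
    (hanti : Antitone G) : ρ ≤ 0 := by
  have hle : (2 : ℝ) ^ ρ ≤ 1 := by
    refine le_of_tendsto (hG 2 two_pos) ?_
    filter_upwards [eventually_ge_atTop 0] with x hx
    exact div_le_one_of_le₀ (hanti (by linarith)) (hpos x).le
  rcases (Real.rpow_le_one_iff_of_pos two_pos).1 hle with h | h
  · exact h.2
  · norm_num at h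

theorem exists_potter_bound (hG : RegularlyVarying G ρ) (hpos : ∀ x, 0 < G x)
    (hanti : Antitone G) {r : ℝ} (hr : -ρ < r) :
    ∃ X > 0, ∀ x ≥ X, ∀ l ≥ 1, G x ≤ (2 * l) ^ r * G (l * x) := by
  have hr₀ : 0 ≤ r := by linarith [hG.nonpos_of_antitone hpos hanti]
  have hlt : ((2 : ℝ) ^ r)⁻¹ < 2 ^ ρ := by
    rw [← Real.rpow_neg two_pos.le]
    exact Real.rpow_lt_rpow_of_exponent_lt one_lt_two (by linarith)
  obtain ⟨X₀, hX₀⟩ := eventually_atTop.1 ((hG 2 two_pos).eventually_const_lt hlt)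
  have hstep : ∀ y ≥ X₀, G y ≤ 2 ^ r * G (2 * y) := fun y hy => by
    have h := hX₀ y hy
    rw [lt_div_iff₀ (hpos y), inv_mul_lt_iff₀ (by positivity)] at h
    exact h.le
  refine ⟨max X₀ 1, by positivity, fun x hx l hl => ?_⟩
  have hx₀ : 0 ≤ x := by linarith [le_max_right X₀ 1]
  obtain ⟨n, hnl, hln⟩ := exists_nat_pow_near hl one_lt_two
  have h2n : (2 : ℝ) ^ (n + 1) ≤ 2 * l := by rw [pow_succ']; gcongr
  calc G x ≤ (2 ^ r) ^ (n + 1) * G (2 ^ (n + 1) * x) :=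
        le_pow_mul_apply_two_pow_mul (by positivity) hstep hx₀ (le_of_max_le_left hx) _
    _ = (2 ^ (n + 1)) ^ r * G (2 ^ (n + 1) * x) := by rw [Real.rpow_pow_comm two_pos.le]
    _ ≤ (2 * l) ^ r * G (l * x) := by
        gcongr
        · exact (hpos _).le
        · exact hanti (by gcongr)

theorem exists_apply_div_le (hG : RegularlyVarying G ρ) (hpos : ∀ x, 0 < G x)
    (hanti : Antitone G) {r : ℝ} (hr : -ρ < r) :
    ∃ X > 0, ∃ K ≥ 0, ∀ t ≥ X, ∀ w > 0, G (t / w) ≤ (1 + K * w ^ r) * G t := by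
  have hr₀ : 0 ≤ r := by linarith [hG.nonpos_of_antitone hpos hanti]
  obtain ⟨X, hX, hpotter⟩ := hG.exists_potter_bound hpos hanti hr
  have hGX := hpos X
  set K := 2 ^ r * (G 0 / G X)
  have hK : 0 ≤ K := by have := hpos 0; positivity
  refine ⟨X, hX, K, hK, fun t ht w hw => ?_⟩
  have ht₀ : 0 < t := hX.trans_le ht
  have hGt := hpos t
  rcases le_total w 1 with hw1 | hw1
  · calc G (t / w) ≤ G t := hanti (le_div_self ht₀.le hw hw1)
      _ ≤ (1 + K * w ^ r) * G t :=
        le_mul_of_one_le_left hGt.le (le_add_of_nonneg_right (by positivity))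
  have hG0X : 1 ≤ G 0 / G X := (one_le_div hGX).2 (hanti hX.le)
  have key : G (t / w) ≤ (2 * w) ^ r * (G 0 / G X) * G t := by
    rcases le_total X (t / w) with hXtw | htwX
    · calc G (t / w) ≤ (2 * w) ^ r * G (w * (t / w)) := hpotter _ hXtw w hw1
        _ = (2 * w) ^ r * 1 * G t := by rw [mul_div_cancel₀ _ hw.ne', mul_one]
        _ ≤ (2 * w) ^ r * (G 0 / G X) * G t := by gcongr
    -- below the Potter threshold: `G (t / w) ≤ G 0`, and Potter at `X` with `l = t / X ≤ w`
    · have htX : 1 ≤ t / X := (one_le_div hX).2 ht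
      have htXw : t / X ≤ w := (div_le_iff₀ hX).2 (by rwa [div_le_iff₀ hw, mul_comm] at htwX)
      calc G (t / w) ≤ G 0 := hanti (by positivity)
        _ = G 0 / G X * G X := (div_mul_cancel₀ _ hGX.ne').symm
        _ ≤ G 0 / G X * ((2 * (t / X)) ^ r * G (t / X * X)) := by
            gcongr; exact hpotter X le_rfl _ htX
        _ ≤ (2 * w) ^ r * (G 0 / G X) * G t := by
            rw [div_mul_cancel₀ _ hX.ne', mul_left_comm, ← mul_assoc]
            gcongr
  calc G (t / w) ≤ (2 * w) ^ r * (G 0 / G X) * G t := key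
    _ = K * w ^ r * G t := by rw [Real.mul_rpow two_pos.le hw.le]; ring
    _ ≤ (1 + K * w ^ r) * G t := by gcongr; exact le_add_of_nonneg_left zero_le_one

end RegularlyVarying

section Independence

variable {Ω α β : Type*} [MeasurableSpace Ω] [MeasurableSpace α] [MeasurableSpace β]
  {μ : Measure Ω} {X : Ω → α} {Y : Ω → β} {S : Set (α × β)}

lemma map_apply_preimage_prodMk_right (hX : Measurable X) (hS : MeasurableSet S) (y : β) :
    μ.map X ((fun x => (x, y)) ⁻¹' S) = μ {ω | (X ω, y) ∈ S} :=
  Measure.map_apply hX (measurable_prodMk_right hS)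

lemma measurable_measure_mem_prodMk [IsFiniteMeasure μ] (hX : Measurable X) (hY : Measurable Y)
    (hS : MeasurableSet S) : Measurable fun ω => μ {ω' | (X ω', Y ω) ∈ S} := by
  simpa only [Function.comp_def, map_apply_preimage_prodMk_right hX hS]
    using (measurable_measure_prodMk_right (μ := μ.map X) hS).comp hY

lemma ProbabilityTheory.IndepFun.measure_mem_eq_lintegral [IsFiniteMeasure μ]
    (hXY : IndepFun X Y μ) (hX : Measurable X) (hY : Measurable Y) (hS : MeasurableSet S) :
    μ {ω | (X ω, Y ω) ∈ S} = ∫⁻ ω, μ {ω' | (X ω', Y ω) ∈ S} ∂μ := by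
  have hmap := (indepFun_iff_map_prod_eq_prod_map_map hX.aemeasurable hY.aemeasurable).1 hXY
  calc μ {ω | (X ω, Y ω) ∈ S} = (μ.map fun ω => (X ω, Y ω)) S :=
        (Measure.map_apply (hX.prodMk hY) hS).symm
    _ = ∫⁻ y, μ.map X ((fun x => (x, y)) ⁻¹' S) ∂(μ.map Y) := by
        rw [hmap, Measure.prod_apply_symm hS]
    _ = ∫⁻ ω, μ {ω' | (X ω', Y ω) ∈ S} ∂μ := by
        rw [lintegral_map (measurable_measure_prodMk_right hS) hY]
        simp only [map_apply_preimage_prodMk_right hX hS]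

lemma ProbabilityTheory.IndepFun.measureReal_mem_eq_integral [IsFiniteMeasure μ]
    (hXY : IndepFun X Y μ) (hX : Measurable X) (hY : Measurable Y) (hS : MeasurableSet S) :
    (μ {ω | (X ω, Y ω) ∈ S}).toReal = ∫ ω, (μ {ω' | (X ω', Y ω) ∈ S}).toReal ∂μ := by
  rw [hXY.measure_mem_eq_lintegral hX hY hS, integral_toReal
    (measurable_measure_mem_prodMk hX hY hS).aemeasurable
    (ae_of_all _ fun _ => measure_lt_top _ _)]

end Independence

section Tail

variable {Ω : Type*} [MeasurableSpace Ω]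

def tail (μ : Measure Ω) (Θ : Ω → ℝ) (x : ℝ) : ℝ := (μ {ω | x < Θ ω}).toReal

variable {μ : Measure Ω} {Θ : Ω → ℝ}

lemma antitone_tail [IsFiniteMeasure μ] : Antitone (tail μ Θ) := fun _ _ hab =>
  ENNReal.toReal_mono (measure_ne_top _ _) (measure_mono fun _ hω => hab.trans_lt hω)

lemma tail_pos [IsFiniteMeasure μ] (h : ∀ x, 0 < μ {ω | x < Θ ω}) (x : ℝ) : 0 < tail μ Θ x :=
  ENNReal.toReal_pos (h x).ne' (measure_ne_top _ _)

lemma measureReal_lt_mul_eq_tail_div {t w : ℝ} (hw : 0 < w) :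
    (μ {ω | t < Θ ω * w}).toReal = tail μ Θ (t / w) := by
  simp only [tail, div_lt_iff₀ hw]

lemma tendsto_measureReal_lt_mul_div_tail {q w : ℝ} (hq : q ≠ 0)
    (hrv : RegularlyVarying (tail μ Θ) (-q)) (hw : 0 ≤ w) :
    Tendsto (fun t => (μ {ω | t < Θ ω * w}).toReal / tail μ Θ t) atTop (𝓝 (w ^ q)) := by
  rcases hw.eq_or_lt with rfl | hw
  · rw [Real.zero_rpow hq]
    refine tendsto_const_nhds.congr' ?_
    filter_upwards [eventually_ge_atTop 0] with t ht
    simp [not_lt.2 ht]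
  · simpa only [measureReal_lt_mul_eq_tail_div hw, neg_neg] using hrv.tendsto_apply_div_div hw

lemma norm_measureReal_lt_mul_div_tail_le {K r t w : ℝ} (hK : 0 ≤ K) (ht : 0 ≤ t) (hw : 0 ≤ w)
    (htail : 0 < tail μ Θ t)
    (hbound : 0 < w → tail μ Θ (t / w) ≤ (1 + K * w ^ r) * tail μ Θ t) :
    ‖(μ {ω | t < Θ ω * w}).toReal / tail μ Θ t‖ ≤ 1 + K * w ^ r := by
  rcases hw.eq_or_lt with rfl | hw
  · simpa [not_lt.2 ht] using
      add_nonneg zero_le_one (mul_nonneg hK (Real.rpow_nonneg le_rfl r))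
  · rw [Real.norm_of_nonneg (div_nonneg ENNReal.toReal_nonneg htail.le),
      measureReal_lt_mul_eq_tail_div hw, div_le_iff₀ htail]
    exact hbound hw

end Tail

theorem breiman_lemma_general
    {Ω : Type*} [MeasureSpace Ω] [IsProbabilityMeasure (ℙ : Measure Ω)]
    (q : ℝ) (hq : 0 < q)
    (Θ : Ω → ℝ) (hΘmeas : Measurable Θ)
    (hΘtail_pos : ∀ x : ℝ, 0 < ℙ {ω | x < Θ ω})
    (hΘrv : ∀ t : ℝ, 0 < t →
      Tendsto (fun x => (ℙ {ω | t * x < Θ ω}).toReal / (ℙ {ω | x < Θ ω}).toReal)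
        atTop (nhds (t ^ (-q))))
    (W : Ω → ℝ) (hWmeas : Measurable W) (hWnonneg : ∀ ω, 0 ≤ W ω)
    (hindep : IndepFun Θ W ℙ)
    (hmoment : ∃ ε : ℝ, 0 < ε ∧ Integrable (fun ω => W ω ^ (q + ε)) ℙ) :
    Tendsto (fun t => (ℙ {ω | t < Θ ω * W ω}).toReal / (ℙ {ω | t < Θ ω}).toReal)
      atTop (nhds (∫ ω, W ω ^ q ∂ℙ)) := by
  obtain ⟨ε, hε, hWint⟩ := hmoment
  have hrv : RegularlyVarying (tail ℙ Θ) (-q) := hΘrv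
  have hpos : ∀ x, 0 < tail ℙ Θ x := tail_pos hΘtail_pos
  obtain ⟨X, hX, K, hK, hbound⟩ :=
    hrv.exists_apply_div_le hpos antitone_tail (r := q + ε) (by linarith)
  have hS : ∀ t : ℝ, MeasurableSet {p : ℝ × ℝ | t < p.1 * p.2} := fun t =>
    measurableSet_lt measurable_const (measurable_fst.mul measurable_snd)
  have hratio : ∀ t, (ℙ {ω | t < Θ ω * W ω}).toReal / tail ℙ Θ t =
      ∫ ω, (ℙ {ω' | t < Θ ω' * W ω}).toReal / tail ℙ Θ t := fun t => by
    rw [integral_div]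
    exact congrArg (· / tail ℙ Θ t) (hindep.measureReal_mem_eq_integral hΘmeas hWmeas (hS t))
  refine (tendsto_integral_filter_of_dominated_convergence (fun ω => 1 + K * W ω ^ (q + ε))
    ?_ ?_ ?_ ?_).congr fun t => (hratio t).symm
  · exact .of_forall fun t => ((measurable_measure_mem_prodMk hΘmeas hWmeas (hS t)).ennreal_toReal
      |>.div_const _).aestronglyMeasurable
  · filter_upwards [eventually_ge_atTop X] with t ht
    exact .of_forall fun ω => norm_measureReal_lt_mul_div_tail_le hK (hX.le.trans ht)
      (hWnonneg ω) (hpos t) (hbound t ht (W ω))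
  · exact (integrable_const 1).add (hWint.const_mul K)
  · exact .of_forall fun ω => tendsto_measureReal_lt_mul_div_tail hq.ne' hrv (hWnonneg ω)

/-- **Breiman's lemma.**
If `Θ > 0` has a regularly varying right tail of index `−q` (`q > 0`), and `W ≥ 0` is
independent of `Θ` with `E[W^{q+ε}] < ∞` for some `ε > 0`, then
`P(ΘW > t)/P(Θ > t) → E[W^q]` as `t → ∞`. -/
theorem breiman_lemma
    {Ω : Type*} [MeasureSpace Ω] [IsProbabilityMeasure (ℙ : Measure Ω)]
    (q : ℝ) (hq : 0 < q)
    (Θ : Ω → ℝ) (hΘmeas : Measurable Θ) (hΘpos : ∀ ω, 0 < Θ ω)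
    (hΘtail_pos : ∀ x : ℝ, 0 < ℙ {ω | x < Θ ω})
    (hΘrv : ∀ t : ℝ, 0 < t →
      Tendsto (fun x => (ℙ {ω | t * x < Θ ω}).toReal / (ℙ {ω | x < Θ ω}).toReal)
        atTop (nhds (t ^ (-q))))
    (W : Ω → ℝ) (hWmeas : Measurable W) (hWnonneg : ∀ ω, 0 ≤ W ω)
    (hindep : IndepFun Θ W ℙ)
    (hmoment : ∃ ε : ℝ, 0 < ε ∧ Integrable (fun ω => W ω ^ (q + ε)) ℙ) :
    Tendsto (fun t => (ℙ {ω | t < Θ ω * W ω}).toReal / (ℙ {ω | t < Θ ω}).toReal)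
      atTop (nhds (∫ ω, W ω ^ q ∂ℙ)) :=
  breiman_lemma_general q hq Θ hΘmeas hΘtail_pos hΘrv W hWmeas hWnonneg hindep hmoment
end
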